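/- arXiv:1312.6917 — 8 statements merged into one kernel-verified Lean document; each statement's English description precedes it below -/
import Mathlib

section
/- Every quandle of cyclic type is two-point homogeneous: for any pairs (x₁,x₂) and (y₁,y₂) of distinct points, there exists f ∈ Inn(X,s) with f(x₁)=y₁ and f(x₂)=y₂. -/
/-!
Each `s c` fixes `c` and is a single cycle on the remaining points, so the powers of `s c` carry
any point other than `c` to any other. With a third point `c ∉ {x₁, y₁}` this sends `x₁` to `y₁`;
a power of `s y₁` then fixes `y₁` and moves the image of `x₂` to `y₂`.
-/

open Equiv Perm

theorem Equiv.Perm.IsCycle.exists_pow_eq_of_support_eq_compl_singleton {X : Type*} [Fintype X]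
    [DecidableEq X] {σ : Perm X} {c a b : X} (hσ : σ.IsCycle) (hsupp : σ.support = {c}ᶜ)
    (ha : a ≠ c) (hb : b ≠ c) : ∃ k : ℕ, (σ ^ k) a = b :=
  hσ.exists_pow_eq (by simpa [← mem_support, hsupp]) (by simpa [← mem_support, hsupp])

theorem Subgroup.exists_mem_apply_eq_apply_eq_of_stabilizer_transitive {X : Type*} [Fintype X]
    (H : Subgroup (Perm X)) (hn : 3 ≤ Fintype.card X)
    (hstab : ∀ c a b : X, a ≠ c → b ≠ c → ∃ g ∈ H, g c = c ∧ g a = b)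
    {x₁ x₂ y₁ y₂ : X} (hx : x₁ ≠ x₂) (hy : y₁ ≠ y₂) : ∃ f ∈ H, f x₁ = y₁ ∧ f x₂ = y₂ := by
  obtain ⟨c, hcx, hcy⟩ := ENat.exists_ne_ne_of_three_le (by simpa using hn) x₁ y₁
  obtain ⟨g, hgH, -, hg⟩ := hstab c x₁ y₁ hcx.symm hcy.symm
  have hgx₂ : g x₂ ≠ y₁ := hg ▸ g.injective.ne hx.symm
  obtain ⟨h, hhH, hh, hhx₂⟩ := hstab y₁ (g x₂) y₂ hgx₂ hy.symm
  exact ⟨h * g, mul_mem hhH hgH, by simp [hg, hh], hhx₂⟩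

theorem stmt_5_general {X : Type*} [Fintype X] [DecidableEq X]
    (hn : 3 ≤ Fintype.card X)
    (s : X → Equiv.Perm X)
    (hS1 : ∀ x : X, s x x = x)
    (hcyc : ∀ x : X, (s x).IsCycle ∧ (s x).support = ({x}ᶜ : Finset X)) :
    ∀ x₁ x₂ y₁ y₂ : X, x₁ ≠ x₂ → y₁ ≠ y₂ →
      ∃ f ∈ Subgroup.closure (Set.range s), f x₁ = y₁ ∧ f x₂ = y₂ := by
  intro x₁ x₂ y₁ y₂ hx hy
  refine (Subgroup.closure (Set.range s)).exists_mem_apply_eq_apply_eq_of_stabilizer_transitive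
    hn (fun c a b ha hb => ?_) hx hy
  obtain ⟨k, hk⟩ := (hcyc c).1.exists_pow_eq_of_support_eq_compl_singleton (hcyc c).2 ha hb
  exact ⟨s c ^ k, pow_mem (Subgroup.subset_closure (Set.mem_range_self c)) k,
    pow_apply_eq_self_of_apply_eq_self (hS1 c) k, hk⟩

/-- every quandle of cyclic type is two-point homogeneous. -/
theorem stmt_5 {X : Type*} [Fintype X] [DecidableEq X]
    (hn : 3 ≤ Fintype.card X)
    (s : X → Equiv.Perm X)
    (hS1 : ∀ x : X, s x x = x)
    (hS3 : ∀ x y : X, s x * s y = s (s x y) * s x)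
    (hcyc : ∀ x : X, (s x).IsCycle ∧ (s x).support = ({x}ᶜ : Finset X)) :
    ∀ x₁ x₂ y₁ y₂ : X, x₁ ≠ x₂ → y₁ ≠ y₂ →
      ∃ f ∈ Subgroup.closure (Set.range s), f x₁ = y₁ ∧ f x₂ = y₂ :=
  stmt_5_general hn s hS1 hcyc
end

section
/- A finite quandle (X,s) with |X| = n ≥ 3 is of cyclic type if and only if (i) X is connected, and (ii) there exists some x ∈ X such that s_x acts on X \ {x} as a cyclic permutation of order n−1. -/
/-! The quandle axiom says that every `s x` conjugates `s y` to `s (s x y)`, hence every element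
`g` of the inner group conjugates `s y` to `s (g y)`. So in a connected quandle all the `s x` are
conjugate, and being an `(n-1)`-cycle fixing exactly the base point transfers from one point to all.
Conversely, if every `s c` is a cycle on `{c}ᶜ`, any two points `a, b` are joined by a power of
`s c` for a third point `c`, which exists as `n ≥ 3`. -/

open Equiv

theorem mul_mul_inv_eq_of_mem_closure_range {X : Type*} {s : X → Perm X}
    (hs : ∀ x y, s x * s y = s (s x y) * s x) {g : Perm X}
    (hg : g ∈ Subgroup.closure (Set.range s)) (y : X) : g * s y * g⁻¹ = s (g y) := by
  induction hg using Subgroup.closure_induction generalizing y with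
  | mem a ha =>
    obtain ⟨x, rfl⟩ := ha
    rw [hs, mul_inv_cancel_right]
  | one => simp
  | mul a b _ _ iha ihb =>
    rw [Perm.mul_apply, ← iha, ← ihb]
    group
  | inv a _ iha =>
    have h := iha (a⁻¹ y)
    rw [← Perm.mul_apply, mul_inv_cancel, Perm.one_apply] at h
    rw [← h]
    group

theorem Equiv.Perm.support_conj_eq_compl_singleton {X : Type*} [Fintype X] [DecidableEq X]
    {σ : Perm X} {x : X} (h : σ.support = {x}ᶜ) (g : Perm X) :
    (g * σ * g⁻¹).support = {g x}ᶜ := by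
  ext y
  simp [Perm.support_conj, h, Equiv.symm_apply_eq]

theorem Equiv.Perm.IsCycle.exists_pow_apply_eq_of_support_eq_compl_singleton {X : Type*}
    [Fintype X] [DecidableEq X] {σ : Perm X} {c a b : X} (hσ : σ.IsCycle)
    (h : σ.support = {c}ᶜ) (ha : a ≠ c) (hb : b ≠ c) : ∃ i : ℕ, (σ ^ i) a = b :=
  hσ.exists_pow_eq (by simp [← Perm.mem_support, h, ha]) (by simp [← Perm.mem_support, h, hb])

theorem stmt_6_general {X : Type*} [Fintype X] [DecidableEq X]
    (hn : 3 ≤ Fintype.card X)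
    (s : X → Equiv.Perm X)
    (hS3 : ∀ x y : X, s x * s y = s (s x y) * s x) :
    (∀ x : X, (s x).IsCycle ∧ (s x).support = ({x}ᶜ : Finset X)) ↔
      ((∀ a b : X, ∃ g ∈ Subgroup.closure (Set.range s), g a = b) ∧
       ∃ x : X, (s x).IsCycle ∧ (s x).support = ({x}ᶜ : Finset X)) := by
  constructor
  · intro hcyc
    have : Nonempty X := Fintype.card_pos_iff.mp (by omega)
    refine ⟨fun a b => ?_, Classical.arbitrary X, hcyc _⟩
    obtain ⟨c, hca, hcb⟩ := ENat.exists_ne_ne_of_three_le (by simpa using hn) a b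
    obtain ⟨i, hi⟩ := (hcyc c).1.exists_pow_apply_eq_of_support_eq_compl_singleton
      (hcyc c).2 hca.symm hcb.symm
    exact ⟨s c ^ i, Subgroup.pow_mem _ (Subgroup.subset_closure (Set.mem_range_self c)) i, hi⟩
  · rintro ⟨hconn, x, hcyc, hsupp⟩ z
    obtain ⟨g, hg, rfl⟩ := hconn x z
    rw [← mul_mul_inv_eq_of_mem_closure_range hS3 hg]
    exact ⟨hcyc.conj, Perm.support_conj_eq_compl_singleton hsupp g⟩

/-- a finite quandle with `card X = n ≥ 3` is of cyclic type
(every `s x` is an (n−1)-cycle on the complement of `{x}`) iff it is connected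
and some `s x` is an (n−1)-cycle on the complement of `{x}`. -/
theorem stmt_6 {X : Type*} [Fintype X] [DecidableEq X]
    (hn : 3 ≤ Fintype.card X)
    (s : X → Equiv.Perm X)
    (hS1 : ∀ x : X, s x x = x)
    (hS3 : ∀ x y : X, s x * s y = s (s x y) * s x) :
    (∀ x : X, (s x).IsCycle ∧ (s x).support = ({x}ᶜ : Finset X)) ↔
      ((∀ a b : X, ∃ g ∈ Subgroup.closure (Set.range s), g a = b) ∧
       ∃ x : X, (s x).IsCycle ∧ (s x).support = ({x}ᶜ : Finset X)) :=
  stmt_6_general hn s hS3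
end

section
/- The dihedral quandle on Z/nZ (n ≥ 3) is of cyclic type if and only if n = 3. -/
/-
A quandle symmetry `s_i : j ↦ 2i - j` is an involution. A cyclic permutation of order dividing 2 moves
exactly two points, so `s_i` can be a cycle on `X \ {i}` only if `n - 1 = 2`. Conversely, on `ℤ/3ℤ`
the map `s_i` is the transposition of the two points other than `i`.
-/

/-- The dihedral quandle structure on `ZMod n`: `s i = (j ↦ 2*i - j)`. -/
def dihedralPerm (n : ℕ) (i : ZMod n) : Equiv.Perm (ZMod n) :=
  Equiv.subLeft (2 * i)

@[simp]
lemma dihedralPerm_apply (n : ℕ) (i j : ZMod n) : dihedralPerm n i j = 2 * i - j := rfl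

lemma dihedralPerm_sq (n : ℕ) (i : ZMod n) : dihedralPerm n i ^ 2 = 1 := by
  ext j
  simp [sq]

lemma Equiv.Perm.IsCycle.card_support_eq_two_of_sq_eq_one {α : Type*} [Fintype α] [DecidableEq α]
    {σ : Equiv.Perm α} (hσ : σ.IsCycle) (hsq : σ ^ 2 = 1) : σ.support.card = 2 := by
  have hdvd : σ.support.card ∣ 2 := hσ.orderOf ▸ orderOf_dvd_of_pow_eq_one hsq
  have hle := Nat.le_of_dvd two_pos hdvd
  have hge := hσ.two_le_card_support
  omega

lemma dihedralPerm_three_eq_swap (i : ZMod 3) :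
    dihedralPerm 3 i = Equiv.swap (i + 1) (i + 2) := by
  ext j
  revert i j
  decide

lemma dihedralPerm_three_isCycle_and_support_eq (i : ZMod 3) :
    (dihedralPerm 3 i).IsCycle ∧ (dihedralPerm 3 i).support = {i}ᶜ := by
  have hne : i + 1 ≠ i + 2 := by
    revert i
    decide
  rw [dihedralPerm_three_eq_swap, Equiv.Perm.support_swap hne]
  refine ⟨Equiv.Perm.isCycle_swap hne, ?_⟩
  revert i
  decide

theorem stmt_7_general (n : ℕ) [NeZero n] :
    (∀ i : ZMod n, (dihedralPerm n i).IsCycle ∧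
      (dihedralPerm n i).support = ({i}ᶜ : Finset (ZMod n))) ↔ n = 3 := by
  constructor
  · intro h
    obtain ⟨hcycle, hsupport⟩ := h 0
    have hcard := hcycle.card_support_eq_two_of_sq_eq_one (dihedralPerm_sq n 0)
    rw [hsupport, Finset.card_compl, Finset.card_singleton, ZMod.card] at hcard
    omega
  · rintro rfl
    exact dihedralPerm_three_isCycle_and_support_eq

/-- the dihedral quandle on `ZMod n` (n ≥ 3) is of cyclic type
iff `n = 3`. -/
theorem stmt_7 (n : ℕ) [NeZero n] (hn : 3 ≤ n) :
    (∀ i : ZMod n, (dihedralPerm n i).IsCycle ∧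
      (dihedralPerm n i).support = ({i}ᶜ : Finset (ZMod n))) ↔ n = 3 :=
  stmt_7_general n
end

section
/- Let Σ ⊆ (S_n)_{n−1} satisfy (D1) s⁻¹Σs ⊆ Σ for all s ∈ Σ and (D2) for every x ∈ {1,…,n} there is a unique element s^Σ_x ∈ Σ with s^Σ_x(x) = x. Then x ↦ s^Σ_x is a quandle structure of cyclic type on {1,…,n}: it satisfies s^Σ_x(x)=x and s^Σ_z ∘ s^Σ_y ∘ (s^Σ_z)⁻¹ = s^Σ_{s^Σ_z(y)} for all y, z. -/
section ConjClosed

variable {G : Type*} [Group G]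

lemma pow_inv_conj_mem {S : Set G} {g : G} (hS : ∀ τ ∈ S, g⁻¹ * τ * g ∈ S) (k : ℕ) :
    ∀ τ ∈ S, (g ^ k)⁻¹ * τ * g ^ k ∈ S := by
  induction k with
  | zero => simp
  | succ k ih =>
    intro τ hτ
    simpa only [pow_succ, mul_inv_rev, mul_assoc] using hS _ (ih τ hτ)

/-- Since `g` has finite order, `g⁻¹` is a power of `g`. -/
lemma conj_mem_of_inv_conj_mem {S : Set G} {g : G} (hg : IsOfFinOrder g)
    (hS : ∀ τ ∈ S, g⁻¹ * τ * g ∈ S) : ∀ τ ∈ S, g * τ * g⁻¹ ∈ S := by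
  obtain ⟨k, hk⟩ : g⁻¹ ∈ Submonoid.powers g :=
    hg.mem_powers_iff_mem_zpowers.mpr (inv_mem (Subgroup.mem_zpowers g))
  intro τ hτ
  simpa [hk] using pow_inv_conj_mem hS k τ hτ

end ConjClosed

theorem stmt_9_general (n : ℕ) (S : Set (Equiv.Perm (Fin n)))
    (hScyc : ∀ σ ∈ S, σ.IsCycle ∧ σ.support.card = n - 1)
    (hD1 : ∀ σ ∈ S, ∀ τ ∈ S, σ⁻¹ * τ * σ ∈ S)
    (hD2 : ∀ x : Fin n, ∃! σ : Equiv.Perm (Fin n), σ ∈ S ∧ σ x = x)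
    (f : Fin n → Equiv.Perm (Fin n))
    (hf : ∀ x : Fin n, f x ∈ S ∧ f x x = x) :
    (∀ x : Fin n, f x x = x) ∧
    (∀ y z : Fin n, f z * f y * (f z)⁻¹ = f (f z y)) ∧
    (∀ x : Fin n, (f x).IsCycle ∧ (f x).support.card = n - 1) := by
  refine ⟨fun x => (hf x).2, fun y z => ?_, fun x => hScyc _ (hf x).1⟩
  have hmem : f z * f y * (f z)⁻¹ ∈ S :=
    conj_mem_of_inv_conj_mem (isOfFinOrder_of_finite _) (hD1 _ (hf z).1) _ (hf y).1
  have hfix : (f z * f y * (f z)⁻¹) (f z y) = f z y := by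
    simp [Equiv.Perm.mul_apply, (hf y).2]
  exact (hD2 (f z y)).unique ⟨hmem, hfix⟩ (hf (f z y))

/-- if `S ⊆ (S_n)_{n−1}` satisfies (D1) and (D2), then the map
`x ↦ s^S_x` (the unique element of `S` fixing `x`) is a quandle structure of
cyclic type on `Fin n`. -/
theorem stmt_9 (n : ℕ) (hn : 3 ≤ n) (S : Set (Equiv.Perm (Fin n)))
    (hScyc : ∀ σ ∈ S, σ.IsCycle ∧ σ.support.card = n - 1)
    (hD1 : ∀ σ ∈ S, ∀ τ ∈ S, σ⁻¹ * τ * σ ∈ S)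
    (hD2 : ∀ x : Fin n, ∃! σ : Equiv.Perm (Fin n), σ ∈ S ∧ σ x = x)
    (f : Fin n → Equiv.Perm (Fin n))
    (hf : ∀ x : Fin n, f x ∈ S ∧ f x x = x) :
    (∀ x : Fin n, f x x = x) ∧
    (∀ y z : Fin n, f z * f y * (f z)⁻¹ = f (f z y)) ∧
    (∀ x : Fin n, (f x).IsCycle ∧ (f x).support.card = n - 1) :=
  stmt_9_general n S hScyc hD1 hD2 f hf
end

section
/- Every quandle structure of cyclic type s on X = {1,…,n} arises from a subset Σ ⊆ (S_n)_{n−1} satisfying (D1) and (D2): namely, Σ := {s_x : x ∈ X} satisfies (D1) s⁻¹Σs ⊆ Σ for all s ∈ Σ, (D2) each x ∈ X is fixed by a unique element of Σ, and the induced quandle structure s^Σ equals s. -/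
/-! An `(n-1)`-cycle on `n` points fixes exactly one point, so `s x` is the only member of
`range s` fixing `x`; this gives (D2) and `s^Σ = s`. (D1) is the axiom
`s_x s_y s_x⁻¹ = s_{s_x y}` read with `s_x⁻¹ y` in place of `y`. -/

namespace Equiv.Perm

variable {α : Type*}

theorem eq_of_apply_eq_self_of_card_support [Fintype α] [DecidableEq α] {σ : Perm α}
    (hσ : Fintype.card α - 1 ≤ σ.support.card) {x y : α} (hx : σ x = x) (hy : σ y = y) :
    x = y := by
  have hcompl : σ.supportᶜ.card ≤ 1 := by
    rw [Finset.card_compl]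
    omega
  exact Finset.card_le_one.mp hcompl x (by simpa using hx) y (by simpa using hy)

theorem inv_mul_mul_eq_of_mul_mul_inv_eq {s : α → Perm α}
    (hs : ∀ x y, s x * s y * (s x)⁻¹ = s (s x y)) (x y : α) :
    (s x)⁻¹ * s y * s x = s ((s x)⁻¹ y) := by
  obtain ⟨z, rfl⟩ := (s x).surjective y
  rw [← hs, coe_inv, Equiv.symm_apply_apply]
  group

end Equiv.Perm

open Equiv.Perm in
theorem stmt_10_general (n : ℕ) (s : Fin n → Equiv.Perm (Fin n))
    (hS1 : ∀ x : Fin n, s x x = x)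
    (hS3 : ∀ x y : Fin n, s x * s y * (s x)⁻¹ = s (s x y))
    (hcyc : ∀ x : Fin n, (s x).IsCycle ∧ (s x).support.card = n - 1) :
    (∀ σ ∈ Set.range s, ∀ τ ∈ Set.range s, σ⁻¹ * τ * σ ∈ Set.range s) ∧
    (∀ x : Fin n, ∃! σ : Equiv.Perm (Fin n), σ ∈ Set.range s ∧ σ x = x) ∧
    (∀ x : Fin n, ∀ σ ∈ Set.range s, σ x = x → σ = s x) := by
  have fixer_unique : ∀ x y, s y x = x → s y = s x := fun x y hx => by
    rw [eq_of_apply_eq_self_of_card_support (by simp [(hcyc y).2]) (hS1 y) hx]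
  refine ⟨?_, fun x => ⟨s x, ⟨⟨x, rfl⟩, hS1 x⟩, ?_⟩, ?_⟩
  · rintro _ ⟨x, rfl⟩ _ ⟨y, rfl⟩
    exact ⟨_, (inv_mul_mul_eq_of_mul_mul_inv_eq hS3 x y).symm⟩
  · rintro _ ⟨⟨y, rfl⟩, hx⟩
    exact fixer_unique x y hx
  · rintro x _ ⟨y, rfl⟩ hx
    exact fixer_unique x y hx

/-- every quandle structure of cyclic type `s` on `Fin n` arises
from `Σ := range s`: this set satisfies (D1) and (D2), and the induced quandle
structure (unique fixing element) equals `s`. -/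
theorem stmt_10 (n : ℕ) (hn : 3 ≤ n) (s : Fin n → Equiv.Perm (Fin n))
    (hS1 : ∀ x : Fin n, s x x = x)
    (hS3 : ∀ x y : Fin n, s x * s y * (s x)⁻¹ = s (s x y))
    (hcyc : ∀ x : Fin n, (s x).IsCycle ∧ (s x).support.card = n - 1) :
    (∀ σ ∈ Set.range s, ∀ τ ∈ Set.range s, σ⁻¹ * τ * σ ∈ Set.range s) ∧
    (∀ x : Fin n, ∃! σ : Equiv.Perm (Fin n), σ ∈ Set.range s ∧ σ x = x) ∧
    (∀ x : Fin n, ∀ σ ∈ Set.range s, σ x = x → σ = s x) :=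
  stmt_10_general n s hS1 hS3 hcyc
end

section
/- Let u₁, u₂ be (n−1)-cycles in S_n with u₁(1)=1, u₂(2)=2, and suppose {u₁^m u₂ u₁^{−m} : m = 1,…,n−2} = {u₂^m u₁ u₂^{−m} : m = 1,…,n−2}. Then the set Σ := {u₁, u₂} ∪ {u₁^m u₂ u₁^{−m} : m = 1,…,n−2} satisfies (D1) s⁻¹Σs ⊆ Σ for all s ∈ Σ, and (D2) every x ∈ {1,…,n} is fixed by a unique element of Σ. -/
/-!
Since `u₁` has order `n - 1`, `S = {u₁} ∪ {g u₂ g⁻¹ : g ∈ ⟨u₁⟩}`, and by (E2) also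
`S = {u₂} ∪ {g u₁ g⁻¹ : g ∈ ⟨u₂⟩}`. The first form is stable under conjugation by `u₁`, the second
by `u₂`, so `S` is normalized by `⟨u₁, u₂⟩ ⊇ S`, which is (D1). For (D2): `g u₂ g⁻¹` fixes exactly
`g 1`, and `⟨u₁⟩` acts simply transitively on the support `{x ≠ 0}` of the cycle `u₁`, so each
`x ≠ 0` is fixed by exactly one of these conjugates and not by `u₁`, while `0` is fixed by `u₁` only.
-/

open Equiv Subgroup

section Conjugates

variable {G : Type*} [Group G]

def powConjugates (u v : G) : Set G := {w | ∃ g ∈ zpowers u, w = g * v * g⁻¹}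

theorem powConjugates_eq_insert {u : G} (v : G) {k : ℕ} (hu : orderOf u = k + 1) :
    powConjugates u v = insert v {w | ∃ m ∈ Finset.Icc 1 k, w = u ^ m * v * (u ^ m)⁻¹} := by
  classical
  have hfin : IsOfFinOrder u := orderOf_pos_iff.mp (by omega)
  ext w
  simp only [powConjugates, hfin.mem_zpowers_iff_mem_range_orderOf, hu, Finset.mem_image,
    Finset.mem_range, Finset.mem_Icc, Set.mem_insert_iff, Set.mem_ofPred_eq]
  constructor
  · rintro ⟨_, ⟨m, hm, rfl⟩, rfl⟩
    rcases Nat.eq_zero_or_pos m with rfl | hm0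
    · simp
    · exact Or.inr ⟨m, ⟨hm0, by omega⟩, rfl⟩
  · rintro (rfl | ⟨m, ⟨hm0, hmk⟩, rfl⟩)
    · exact ⟨1, ⟨0, by omega, pow_zero u⟩, by group⟩
    · exact ⟨u ^ m, ⟨m, by omega, rfl⟩, rfl⟩

theorem conj_mem_insert_powConjugates {u v g w : G} (hg : g ∈ zpowers u)
    (hw : w ∈ insert u (powConjugates u v)) : g * w * g⁻¹ ∈ insert u (powConjugates u v) := by
  rcases hw with rfl | ⟨h, hh, rfl⟩
  · left
    obtain ⟨k, rfl⟩ := hg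
    group
  · exact Or.inr ⟨g * h, mul_mem hg hh, by group⟩

theorem mem_normalizer_insert_powConjugates (u v : G) :
    u ∈ normalizer (insert u (powConjugates u v)) := by
  refine mem_set_normalizer_iff.mpr fun w => ⟨conj_mem_insert_powConjugates (mem_zpowers u), ?_⟩
  intro hw
  simpa [mul_assoc] using conj_mem_insert_powConjugates (inv_mem (mem_zpowers u)) hw

theorem insert_powConjugates_subset_closure (u v : G) :
    insert u (powConjugates u v) ⊆ closure {u, v} := by
  have hu : u ∈ closure {u, v} := subset_closure (by simp)
  rintro w (rfl | ⟨g, hg, rfl⟩)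
  · exact hu
  · have hg' : g ∈ closure {u, v} := zpowers_le.mpr hu hg
    exact mul_mem (mul_mem hg' (subset_closure (by simp))) (inv_mem hg')

theorem conj_mem_of_insert_powConjugates_eq {u v : G}
    (h : insert u (powConjugates u v) = insert v (powConjugates v u)) :
    ∀ σ ∈ insert u (powConjugates u v), ∀ τ ∈ insert u (powConjugates u v),
      σ⁻¹ * τ * σ ∈ insert u (powConjugates u v) := by
  set S := insert u (powConjugates u v)
  have hclosure : closure {u, v} ≤ normalizer S := by
    rw [closure_le, Set.insert_subset_iff, Set.singleton_subset_iff]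
    refine ⟨mem_normalizer_insert_powConjugates u v, ?_⟩
    rw [SetLike.mem_coe, h]
    exact mem_normalizer_insert_powConjugates v u
  intro σ hσ τ hτ
  exact (mem_set_normalizer_iff''.mp (hclosure (insert_powConjugates_subset_closure u v hσ)) τ).mp hτ

end Conjugates

section Perm

variable {α : Type*}

theorem Equiv.Perm.IsCycle.eq_one_of_mem_zpowers [Finite α] {u g : Perm α} (hu : u.IsCycle)
    (hg : g ∈ zpowers u) {x : α} (hx : u x ≠ x) (hgx : g x = x) : g = 1 := by
  obtain ⟨k, rfl⟩ := (isOfFinOrder_of_finite u).mem_powers_iff_mem_zpowers.mpr hg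
  exact (hu.pow_eq_one_iff' hx).mpr hgx

theorem Equiv.Perm.conj_apply_eq_self_iff {g v : Perm α} {b : α} (hv : ∀ y, v y = y ↔ y = b)
    (x : α) : (g * v * g⁻¹) x = x ↔ x = g b := by
  rw [Perm.mul_apply, Perm.mul_apply, ← Perm.eq_inv_iff_eq, hv, Perm.inv_eq_iff_eq, eq_comm]

theorem Equiv.Perm.apply_eq_self_iff_of_card_support [Fintype α] [DecidableEq α] {u : Perm α}
    {a : α} (hcard : u.support.card = Fintype.card α - 1) (ha : u a = a) (x : α) :
    u x = x ↔ x = a := by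
  have hsupp : u.support = Finset.univ.erase a := by
    refine Finset.eq_of_subset_of_card_le (fun y hy => ?_) ?_
    · exact Finset.mem_erase.mpr ⟨fun hya => Perm.mem_support.mp hy (hya ▸ ha), Finset.mem_univ y⟩
    · rw [Finset.card_erase_of_mem (Finset.mem_univ a), Finset.card_univ, hcard]
  rw [← Perm.notMem_support, hsupp]
  simp

theorem Equiv.Perm.existsUnique_fixing_mem_insert_powConjugates [Finite α] {u v : Perm α}
    {a b : α} (hu : u.IsCycle) (hua : ∀ y, u y = y ↔ y = a) (hvb : ∀ y, v y = y ↔ y = b)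
    (hab : a ≠ b) (x : α) : ∃! σ, σ ∈ insert u (powConjugates u v) ∧ σ x = x := by
  have hga : ∀ g ∈ zpowers u, g a = a := by
    rintro _ ⟨k, rfl⟩
    exact Perm.zpow_apply_eq_self_of_apply_eq_self ((hua a).mpr rfl) k
  by_cases hxa : x = a
  · subst hxa
    refine ⟨u, ⟨Set.mem_insert u _, (hua x).mpr rfl⟩, ?_⟩
    rintro σ ⟨rfl | ⟨g, hg, rfl⟩, hσx⟩
    · rfl
    · refine absurd ?_ hab
      rw [conj_apply_eq_self_iff hvb, ← hga g hg] at hσx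
      exact g.injective hσx
  · have hub : u b ≠ b := fun h => hab ((hua b).mp h).symm
    have hux : u x ≠ x := fun h => hxa ((hua x).mp h)
    obtain ⟨k, hk⟩ := hu.exists_zpow_eq hub hux
    refine ⟨u ^ k * v * (u ^ k)⁻¹, ⟨Or.inr ⟨_, zpow_mem_zpowers u k, rfl⟩,
      (conj_apply_eq_self_iff hvb x).mpr hk.symm⟩, ?_⟩
    rintro σ ⟨rfl | ⟨g, hg, rfl⟩, hσx⟩
    · exact absurd ((hua x).mp hσx) hxa
    · rw [conj_apply_eq_self_iff hvb, ← hk] at hσx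
      have : (u ^ k)⁻¹ * g = 1 :=
        hu.eq_one_of_mem_zpowers (mul_mem (inv_mem (zpow_mem_zpowers u k)) hg) hub
          (by simp [← hσx])
      rw [inv_mul_eq_one.mp this]

end Perm

/-- if `u₁, u₂` are (n−1)-cycles in `S_n` with `u₁` fixing the
first point and `u₂` the second (points of `{1,…,n}` are labelled by `Fin n`,
so these are `0` and `1`), satisfying condition (E2), then
`Σ := {u₁, u₂} ∪ {u₁^m u₂ u₁^{−m} : m = 1,…,n−2}` satisfies (D1) and (D2). -/
theorem stmt_13 (n : ℕ) [NeZero n] (hn : 3 ≤ n)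
    (u₁ u₂ : Equiv.Perm (Fin n))
    (h1c : u₁.IsCycle) (h1card : u₁.support.card = n - 1)
    (h2c : u₂.IsCycle) (h2card : u₂.support.card = n - 1)
    (h1 : u₁ 0 = 0) (h2 : u₂ 1 = 1)
    (hE2 : {σ : Equiv.Perm (Fin n) | ∃ m ∈ Finset.Icc 1 (n - 2), σ = u₁ ^ m * u₂ * (u₁ ^ m)⁻¹}
         = {σ : Equiv.Perm (Fin n) | ∃ m ∈ Finset.Icc 1 (n - 2), σ = u₂ ^ m * u₁ * (u₂ ^ m)⁻¹})
    (S : Set (Equiv.Perm (Fin n)))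
    (hS : S = {u₁, u₂} ∪
      {σ : Equiv.Perm (Fin n) | ∃ m ∈ Finset.Icc 1 (n - 2), σ = u₁ ^ m * u₂ * (u₁ ^ m)⁻¹}) :
    (∀ σ ∈ S, ∀ τ ∈ S, σ⁻¹ * τ * σ ∈ S) ∧
    (∀ x : Fin n, ∃! σ : Equiv.Perm (Fin n), σ ∈ S ∧ σ x = x) := by
  have hn1 : n - 1 = n - 2 + 1 := by omega
  have hS₁ : S = insert u₁ (powConjugates u₁ u₂) := by
    rw [hS, powConjugates_eq_insert u₂ (by rw [h1c.orderOf, h1card, hn1]), Set.insert_union,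
      Set.singleton_union]
  have hS₂ : S = insert u₂ (powConjugates u₂ u₁) := by
    rw [hS, hE2, powConjugates_eq_insert u₁ (by rw [h2c.orderOf, h2card, hn1]), Set.insert_union,
      Set.singleton_union, Set.insert_comm]
  have h01 : (0 : Fin n) ≠ 1 := by
    rw [Ne, Fin.ext_iff, Fin.val_zero, Fin.val_one', Nat.mod_eq_of_lt (by omega)]
    omega
  subst hS₁
  exact ⟨conj_mem_of_insert_powConjugates_eq hS₂,
    Perm.existsUnique_fixing_mem_insert_powConjugates h1c
      (Perm.apply_eq_self_iff_of_card_support (by rwa [Fintype.card_fin]) h1)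
      (Perm.apply_eq_self_iff_of_card_support (by rwa [Fintype.card_fin]) h2) h01⟩
end

section
/- Let Σ ⊆ (S_n)_{n−1} satisfy (D1) and (D2), and write s_x := s^Σ_x for the unique element of Σ fixing x. Then {s₁^m s₂ s₁^{−m} : m = 1,…,n−2} = {s_x : x = 3,…,n} = {s₂^m s₁ s₂^{−m} : m = 1,…,n−2}. In particular, the pair (s₁, s₂) satisfies condition (E2). -/
/-!
Write `s_x` for the element of `Σ` fixing `x`. By (D1), every conjugate `s_a^m s_b s_a^{-m}`
lies in `Σ`, and it fixes `s_a^m b`, so by (D2) it equals `s_{s_a^m b}`. Since `s_a` is an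
`(n-1)`-cycle on the points other than `a`, the points `s_a^m b` for `1 ≤ m ≤ n-2` run through
all points other than `a` and `b`.
-/

open Equiv Finset

namespace Equiv.Perm

variable {α : Type*} [Fintype α] [DecidableEq α]

theorem IsCycle.image_pow_apply_Icc {σ : Perm α} (hσ : σ.IsCycle) {b : α} (hb : b ∈ σ.support) :
    (fun m => (σ ^ m) b) '' Set.Icc 1 (#σ.support - 1) = ↑σ.support \ {b} := by
  have hb' : σ b ≠ b := mem_support.mp hb
  ext x
  simp only [Set.mem_image, Set.mem_Icc, Set.mem_sdiff, mem_coe, Set.mem_singleton_iff]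
  constructor
  · rintro ⟨m, ⟨hm1, hm2⟩, rfl⟩
    refine ⟨pow_apply_mem_support.mpr hb, fun hfix => ?_⟩
    have hdvd : #σ.support ∣ m :=
      hσ.orderOf ▸ orderOf_dvd_of_pow_eq_one ((hσ.pow_eq_one_iff' hb').mpr hfix)
    have := Nat.le_of_dvd (by omega) hdvd
    omega
  · rintro ⟨hx, hxb⟩
    obtain ⟨i, hi, rfl⟩ := (hσ.sameCycle hb' (mem_support.mp hx)).exists_pow_eq'
    rw [hσ.orderOf] at hi
    have hi0 : i ≠ 0 := by rintro rfl; exact hxb rfl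
    exact ⟨i, ⟨by omega, by omega⟩, rfl⟩

theorem support_eq_compl_singleton {σ : Perm α} {a : α} (ha : σ a = a)
    (hcard : #σ.support = Fintype.card α - 1) : σ.support = {a}ᶜ := by
  refine eq_of_subset_of_card_le (fun x hx => ?_) ?_
  · rw [mem_compl, mem_singleton]
    rintro rfl
    exact mem_support.mp hx ha
  · rw [card_compl, card_singleton, hcard]

end Equiv.Perm

theorem pow_mul_mul_pow_inv_mem {G : Type*} [Group G] [Finite G] {S : Set G}
    (hS : ∀ σ ∈ S, ∀ τ ∈ S, σ⁻¹ * τ * σ ∈ S) {σ τ : G} (hσ : σ ∈ S) (hτ : τ ∈ S) (m : ℕ) :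
    σ ^ m * τ * (σ ^ m)⁻¹ ∈ S := by
  have hconj_pow : ∀ k : ℕ, (σ ^ k)⁻¹ * τ * σ ^ k ∈ S := by
    intro k
    induction k with
    | zero => simpa using hτ
    | succ k ih => simpa [pow_succ, mul_assoc] using hS σ hσ _ ih
  obtain ⟨k, hk⟩ : (σ ^ m)⁻¹ ∈ Submonoid.powers σ :=
    mem_powers_iff_mem_zpowers.mpr (inv_mem (Subgroup.npow_mem_zpowers σ m))
  simpa [hk] using hconj_pow k

section DistinguishedCycles

variable {α : Type*} {S : Set (Perm α)} {f : α → Perm α}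

theorem eq_of_mem_of_apply_eq_self (hD2 : ∀ x : α, ∃! σ : Perm α, σ ∈ S ∧ σ x = x)
    (hf : ∀ x : α, f x ∈ S ∧ f x x = x) {σ : Perm α} {x : α} (hσ : σ ∈ S) (hσx : σ x = x) :
    σ = f x :=
  (hD2 x).unique ⟨hσ, hσx⟩ (hf x)

variable [Fintype α]

theorem pow_mul_mul_pow_inv_eq_apply_pow (hD1 : ∀ σ ∈ S, ∀ τ ∈ S, σ⁻¹ * τ * σ ∈ S)
    (hD2 : ∀ x : α, ∃! σ : Perm α, σ ∈ S ∧ σ x = x) (hf : ∀ x : α, f x ∈ S ∧ f x x = x)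
    (a b : α) (m : ℕ) : f a ^ m * f b * (f a ^ m)⁻¹ = f ((f a ^ m) b) :=
  eq_of_mem_of_apply_eq_self hD2 hf (pow_mul_mul_pow_inv_mem hD1 (hf a).1 (hf b).1 m)
    (by simp [(hf b).2])

variable [DecidableEq α]

theorem setOf_pow_mul_mul_pow_inv_eq_image
    (hScyc : ∀ σ ∈ S, σ.IsCycle ∧ #σ.support = Fintype.card α - 1)
    (hD1 : ∀ σ ∈ S, ∀ τ ∈ S, σ⁻¹ * τ * σ ∈ S)
    (hD2 : ∀ x : α, ∃! σ : Perm α, σ ∈ S ∧ σ x = x) (hf : ∀ x : α, f x ∈ S ∧ f x x = x)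
    {a b : α} (hab : a ≠ b) :
    {σ : Perm α | ∃ m ∈ Icc 1 (Fintype.card α - 2), σ = f a ^ m * f b * (f a ^ m)⁻¹}
      = f '' {x : α | x ≠ a ∧ x ≠ b} := by
  obtain ⟨hcyc, hcard⟩ := hScyc _ (hf a).1
  have hsupp : (f a).support = {a}ᶜ := Perm.support_eq_compl_singleton (hf a).2 hcard
  have hb : b ∈ (f a).support := by simp [hsupp, hab.symm]
  calc {σ : Perm α | ∃ m ∈ Icc 1 (Fintype.card α - 2), σ = f a ^ m * f b * (f a ^ m)⁻¹}
      = f '' ((fun m => (f a ^ m) b) '' Set.Icc 1 (#(f a).support - 1)) := by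
        rw [Set.image_image, hcard, Nat.sub_sub, ← coe_Icc]
        ext σ
        simp [pow_mul_mul_pow_inv_eq_apply_pow hD1 hD2 hf, eq_comm]
    _ = f '' {x : α | x ≠ a ∧ x ≠ b} := by
        rw [hcyc.image_pow_apply_Icc hb, hsupp]
        ext x
        simp [and_comm]

end DistinguishedCycles

/-- for `S ⊆ (S_n)_{n−1}` satisfying (D1),(D2), with `s_x := f x`
the unique element of `S` fixing `x` (points `1,2,…,n` labelled by
`0,1,…,n−1 : Fin n`), one has
`{s₁^m s₂ s₁^{−m} : m = 1,…,n−2} = {s_x : x = 3,…,n} = {s₂^m s₁ s₂^{−m} : m = 1,…,n−2}`;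
in particular `(s₁, s₂)` satisfies (E2). -/
theorem stmt_14 (n : ℕ) [NeZero n] (hn : 3 ≤ n)
    (S : Set (Equiv.Perm (Fin n)))
    (hScyc : ∀ σ ∈ S, σ.IsCycle ∧ σ.support.card = n - 1)
    (hD1 : ∀ σ ∈ S, ∀ τ ∈ S, σ⁻¹ * τ * σ ∈ S)
    (hD2 : ∀ x : Fin n, ∃! σ : Equiv.Perm (Fin n), σ ∈ S ∧ σ x = x)
    (f : Fin n → Equiv.Perm (Fin n))
    (hf : ∀ x : Fin n, f x ∈ S ∧ f x x = x) :
    ({σ : Equiv.Perm (Fin n) | ∃ m ∈ Finset.Icc 1 (n - 2), σ = (f 0) ^ m * f 1 * ((f 0) ^ m)⁻¹}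
       = f '' {x : Fin n | 2 ≤ (x : ℕ)}) ∧
    ({σ : Equiv.Perm (Fin n) | ∃ m ∈ Finset.Icc 1 (n - 2), σ = (f 1) ^ m * f 0 * ((f 1) ^ m)⁻¹}
       = f '' {x : Fin n | 2 ≤ (x : ℕ)}) := by
  have hScyc' : ∀ σ ∈ S, σ.IsCycle ∧ #σ.support = Fintype.card (Fin n) - 1 := by
    simpa using hScyc
  have hval_one : ((1 : Fin n) : ℕ) = 1 := by
    rw [Fin.val_one', Nat.mod_eq_of_lt (by omega)]
  have hzero_ne_one : (0 : Fin n) ≠ 1 := Fin.ne_of_val_ne (by rw [Fin.val_zero, hval_one]; omega)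
  have hrest : {x : Fin n | x ≠ 0 ∧ x ≠ 1} = {x : Fin n | 2 ≤ (x : ℕ)} := by
    ext x
    simp only [Set.mem_ofPred_eq, ne_eq, Fin.ext_iff, Fin.val_zero, hval_one]
    omega
  have key := fun {a b : Fin n} (hab : a ≠ b) =>
    Fintype.card_fin n ▸ setOf_pow_mul_mul_pow_inv_eq_image hScyc' hD1 hD2 hf hab
  refine ⟨by rw [key hzero_ne_one, hrest], ?_⟩
  rw [key hzero_ne_one.symm, ← hrest]
  simp only [and_comm]
end

section
/- Let s₁ := (2 3 ⋯ n) ∈ S_n, and let s₂ be an (n−1)-cycle with s₂(2)=2 satisfying (F2): {s₂^m s₁ s₂^{−m} : m=1,…,n−2} = {s₁^m s₂ s₁^{−m} : m=1,…,n−2}. If m ∈ ℤ satisfies s₂(1) = s₁^m(2), then s₁^m s₂ s₁^{−m} = s₂ s₁ s₂⁻¹. -/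
/-!
The permutation `s₂ s₁ s₂⁻¹` lies in the left-hand set of (F2) (take `m = 1`), hence equals
`σ = s₁ᵏ s₂ s₁⁻ᵏ` for some `k`. As a conjugate of `s₂`, which moves `n - 1` points, `σ` has at
most one fixed point. It fixes `s₁ᵏ 1` because `s₂` fixes `1`, and it fixes `s₂ 0` because
`σ = s₂ s₁ s₂⁻¹` and `s₁` fixes `0`. So `s₁ᵐ 1 = s₂ 0 = s₁ᵏ 1`, and since `s₁` is a cycle
moving `1`, this forces `s₁ᵐ = s₁ᵏ`.
-/

open Equiv Finset

namespace Equiv.Perm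

variable {α : Type*} [Fintype α] [DecidableEq α]

theorem IsCycle.zpow_eq_zpow_of_zpow_apply_eq {f : Perm α} (hf : f.IsCycle) {x : α}
    (hx : f x ≠ x) {a b : ℤ} (h : (f ^ a) x = (f ^ b) x) : f ^ a = f ^ b := by
  have hon : f.IsCycleOn (f.support : Set α) := by
    rw [coe_support_eq_set_support]
    exact hf.isCycleOn
  rwa [zpow_eq_zpow_iff_modEq, hf.orderOf, ← hon.zpow_apply_eq_zpow_apply (mem_support.2 hx)]

theorem eq_of_apply_eq_self_of_card_le {σ : Perm α} (hσ : Fintype.card α ≤ #σ.support + 1)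
    {x y : α} (hx : σ x = x) (hy : σ y = y) : x = y := by
  have : #σ.supportᶜ ≤ 1 := by rw [card_compl]; omega
  exact card_le_one.1 this x (by simpa) y (by simpa)

theorem zpow_conj_eq_conj_of_apply_eq_zpow_apply {s₁ s₂ : Perm α} (hs₁ : s₁.IsCycle) {a b : α}
    (ha : s₁ a = a) (hb : s₁ b ≠ b) (hb₂ : s₂ b = b)
    (hs₂ : Fintype.card α ≤ #s₂.support + 1) {k : ℤ}
    (hk : s₂ * s₁ * s₂⁻¹ = s₁ ^ k * s₂ * (s₁ ^ k)⁻¹) {m : ℤ} (hm : s₂ a = (s₁ ^ m) b) :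
    s₁ ^ m * s₂ * (s₁ ^ m)⁻¹ = s₂ * s₁ * s₂⁻¹ := by
  set σ := s₁ ^ k * s₂ * (s₁ ^ k)⁻¹
  have hσ : Fintype.card α ≤ #σ.support + 1 := by rwa [card_support_conj]
  have hfix_b : σ ((s₁ ^ k) b) = (s₁ ^ k) b := by simp [σ, hb₂]
  have hfix_a : σ (s₂ a) = s₂ a := by rw [← hk]; simp [ha]
  have hmk : s₁ ^ m = s₁ ^ k :=
    hs₁.zpow_eq_zpow_of_zpow_apply_eq hb (hm ▸ eq_of_apply_eq_self_of_card_le hσ hfix_a hfix_b)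
  rw [hmk, hk]

end Equiv.Perm

section CycleTwoToN

variable {n : ℕ} [NeZero n] {s : Perm (Fin n)}

theorem cycleTwoToN_pow_apply_one
    (hs : ∀ i : Fin n, s i = if i = 0 then 0 else if (i : ℕ) = n - 1 then 1 else i + 1)
    {j : ℕ} (hj : j + 1 < n) : (s ^ j) 1 = ⟨j + 1, hj⟩ := by
  induction j with
  | zero => ext; simp [Nat.mod_eq_of_lt hj]
  | succ j ih =>
    rw [pow_succ', Perm.mul_apply, ih (by omega), hs, if_neg (by simp [Fin.ext_iff]),
      if_neg (by simp; omega)]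
    ext
    simp [Fin.val_add, Nat.mod_eq_of_lt (by omega : 1 < n), Nat.mod_eq_of_lt hj]

theorem cycleTwoToN_apply_one_ne (hn : 3 ≤ n)
    (hs : ∀ i : Fin n, s i = if i = 0 then 0 else if (i : ℕ) = n - 1 then 1 else i + 1) :
    s 1 ≠ 1 := by
  rw [← pow_one s, cycleTwoToN_pow_apply_one hs (by omega)]
  simp [Fin.ext_iff, Nat.mod_eq_of_lt (by omega : 1 < n)]

theorem cycleTwoToN_isCycle (hn : 3 ≤ n)
    (hs : ∀ i : Fin n, s i = if i = 0 then 0 else if (i : ℕ) = n - 1 then 1 else i + 1) :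
    s.IsCycle := by
  refine ⟨1, cycleTwoToN_apply_one_ne hn hs, fun y hy => ⟨((y : ℕ) - 1 : ℕ), ?_⟩⟩
  have hy0 : (y : ℕ) ≠ 0 := Fin.val_ne_zero_iff.2 (by rintro rfl; simp [hs] at hy)
  rw [zpow_natCast, cycleTwoToN_pow_apply_one hs (by omega)]
  ext
  simp only
  omega

end CycleTwoToN

theorem stmt_15_general (n : ℕ) [NeZero n] (hn : 3 ≤ n)
    (s₁ s₂ : Equiv.Perm (Fin n))
    (hs₁ : ∀ i : Fin n, s₁ i = if i = 0 then 0 else if (i : ℕ) = n - 1 then 1 else i + 1)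
    (h2card : s₂.support.card = n - 1)
    (hF1 : s₂ 1 = 1)
    (hF2 : {σ : Equiv.Perm (Fin n) | ∃ m ∈ Finset.Icc 1 (n - 2), σ = s₂ ^ m * s₁ * (s₂ ^ m)⁻¹}
         = {σ : Equiv.Perm (Fin n) | ∃ m ∈ Finset.Icc 1 (n - 2), σ = s₁ ^ m * s₂ * (s₁ ^ m)⁻¹})
    (m : ℤ) (hm : s₂ 0 = (s₁ ^ m) 1) :
    s₁ ^ m * s₂ * (s₁ ^ m)⁻¹ = s₂ * s₁ * s₂⁻¹ := by
  have hmem : s₂ * s₁ * s₂⁻¹ ∈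
      {σ : Equiv.Perm (Fin n) | ∃ m ∈ Finset.Icc 1 (n - 2), σ = s₂ ^ m * s₁ * (s₂ ^ m)⁻¹} :=
    ⟨1, Finset.mem_Icc.2 ⟨le_rfl, by omega⟩, by simp⟩
  rw [hF2] at hmem
  obtain ⟨k, -, hk⟩ := hmem
  rw [← zpow_natCast] at hk
  exact Perm.zpow_conj_eq_conj_of_apply_eq_zpow_apply (cycleTwoToN_isCycle hn hs₁)
    (by simp [hs₁]) (cycleTwoToN_apply_one_ne hn hs₁) hF1 (by rw [Fintype.card_fin, h2card]; omega) hk hm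

/-- Lemma 4.6: points `1,…,n` are labelled by `0,…,n−1 : Fin n`;
`s₁` is the cycle `(2 3 ⋯ n)`, i.e. it fixes `0` and sends `i ↦ i+1` on
`1,…,n−2` and `n−1 ↦ 1`. If `s₂` is an (n−1)-cycle fixing `1` (the point `2`)
satisfying (F2), and `m : ℤ` satisfies `s₂ 0 = s₁^m 1`, then
`s₁^m s₂ s₁^{−m} = s₂ s₁ s₂⁻¹`. -/
theorem stmt_15 (n : ℕ) [NeZero n] (hn : 3 ≤ n)
    (s₁ s₂ : Equiv.Perm (Fin n))
    (hs₁ : ∀ i : Fin n, s₁ i = if i = 0 then 0 else if (i : ℕ) = n - 1 then 1 else i + 1)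
    (h2c : s₂.IsCycle) (h2card : s₂.support.card = n - 1)
    (hF1 : s₂ 1 = 1)
    (hF2 : {σ : Equiv.Perm (Fin n) | ∃ m ∈ Finset.Icc 1 (n - 2), σ = s₂ ^ m * s₁ * (s₂ ^ m)⁻¹}
         = {σ : Equiv.Perm (Fin n) | ∃ m ∈ Finset.Icc 1 (n - 2), σ = s₁ ^ m * s₂ * (s₁ ^ m)⁻¹})
    (m : ℤ) (hm : s₂ 0 = (s₁ ^ m) 1) :
    s₁ ^ m * s₂ * (s₁ ^ m)⁻¹ = s₂ * s₁ * s₂⁻¹ :=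
  stmt_15_general n hn s₁ s₂ hs₁ h2card hF1 hF2 m hm
end
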